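/- arXiv:1911.01850 — 7 statements merged into one kernel-verified Lean document; each statement's English description precedes it below -/
import Mathlib

section
/- Let d ≥ 1, let p, c, v, w ∈ ℝ^d and B_X, M ∈ ℝ^{d×d}, and suppose the (d+1)×(d+1) real block matrices A = [[1, −pᵀ],[−c, Id − B_X]] and N = [[1, vᵀ],[w, M]] satisfy A·N = Id and N·A = Id. Then M is invertible with inverse (Id − c vᵀ)(Id − B_X), i.e., M · (Id − c vᵀ)(Id − B_X) = Id and (Id − c vᵀ)(Id − B_X) · M = Id. -/
open Matrix

theorem Matrix.mul_one_sub_mul_mul_eq_one_of_fromBlocks_mul_eq_one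
    {R m n : Type*} [Ring R] [Fintype m] [Fintype n] [DecidableEq m] [DecidableEq n]
    {V P : Matrix m n R} {W C : Matrix n m R} {M B : Matrix n n R}
    (h : fromBlocks 1 V W M * fromBlocks 1 (-P) (-C) B = 1) :
    M * ((1 - C * V) * B) = 1 := by
  rw [fromBlocks_multiply, ← fromBlocks_one, fromBlocks_inj] at h
  obtain ⟨-, hVB, hMC, hMB⟩ := h
  have hVB : V * B = P := by
    rw [Matrix.mul_neg, Matrix.one_mul, neg_add_eq_zero] at hVB
    exact hVB.symm
  have hMC : M * C = W := by
    rw [Matrix.mul_one, Matrix.mul_neg, ← sub_eq_add_neg, sub_eq_zero] at hMC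
    exact hMC.symm
  have hMB : M * B = 1 + W * P := by
    rw [Matrix.mul_neg, neg_add_eq_iff_eq_add] at hMB
    rw [hMB, add_comm]
  calc M * ((1 - C * V) * B)
      = M * B - (M * C) * (V * B) := by
        simp only [Matrix.sub_mul, Matrix.mul_sub, Matrix.one_mul, Matrix.mul_assoc]
    _ = 1 := by rw [hMB, hMC, hVB, add_sub_cancel_right]

theorem M_inverse_general {d : ℕ}
    (p c v w : Fin d → ℝ) (B_X M : Matrix (Fin d) (Fin d) ℝ)
    (hNA : fromBlocks (1 : Matrix (Fin 1) (Fin 1) ℝ) (replicateRow (Fin 1) v) (replicateCol (Fin 1) w) M *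
        fromBlocks (1 : Matrix (Fin 1) (Fin 1) ℝ) (-replicateRow (Fin 1) p) (-replicateCol (Fin 1) c)
          ((1 : Matrix (Fin d) (Fin d) ℝ) - B_X) = 1) :
    M * (((1 : Matrix (Fin d) (Fin d) ℝ) - vecMulVec c v) *
        ((1 : Matrix (Fin d) (Fin d) ℝ) - B_X)) = 1 ∧
    (((1 : Matrix (Fin d) (Fin d) ℝ) - vecMulVec c v) *
        ((1 : Matrix (Fin d) (Fin d) ℝ) - B_X)) * M = 1 := by
  have hright : M * ((1 - vecMulVec c v) * (1 - B_X)) = 1 := by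
    rw [vecMulVec_eq (Fin 1)]
    exact mul_one_sub_mul_mul_eq_one_of_fromBlocks_mul_eq_one hNA
  exact ⟨hright, mul_eq_one_comm.mp hright⟩

/-- If the block matrices `A = [[1, −pᵀ],[−c, Id − B_X]]` and `N = [[1, vᵀ],[w, M]]`
are mutually inverse, then `M` is invertible with inverse `(Id − c vᵀ)(Id − B_X)`. -/
theorem M_inverse {d : ℕ} (hd : 1 ≤ d)
    (p c v w : Fin d → ℝ) (B_X M : Matrix (Fin d) (Fin d) ℝ)
    (hAN : fromBlocks (1 : Matrix (Fin 1) (Fin 1) ℝ) (-replicateRow (Fin 1) p) (-replicateCol (Fin 1) c)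
          ((1 : Matrix (Fin d) (Fin d) ℝ) - B_X) *
        fromBlocks (1 : Matrix (Fin 1) (Fin 1) ℝ) (replicateRow (Fin 1) v) (replicateCol (Fin 1) w) M = 1)
    (hNA : fromBlocks (1 : Matrix (Fin 1) (Fin 1) ℝ) (replicateRow (Fin 1) v) (replicateCol (Fin 1) w) M *
        fromBlocks (1 : Matrix (Fin 1) (Fin 1) ℝ) (-replicateRow (Fin 1) p) (-replicateCol (Fin 1) c)
          ((1 : Matrix (Fin d) (Fin d) ℝ) - B_X) = 1) :
    M * (((1 : Matrix (Fin d) (Fin d) ℝ) - vecMulVec c v) *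
        ((1 : Matrix (Fin d) (Fin d) ℝ) - B_X)) = 1 ∧
    (((1 : Matrix (Fin d) (Fin d) ℝ) - vecMulVec c v) *
        ((1 : Matrix (Fin d) (Fin d) ℝ) - B_X)) * M = 1 :=
  M_inverse_general p c v w B_X M hNA
end

section
/- Let d ≥ 1, let p, c, v, w ∈ ℝ^d and B_X, M ∈ ℝ^{d×d}, and suppose the (d+1)×(d+1) real block matrices A = [[1, −pᵀ],[−c, Id − B_X]] and N = [[1, vᵀ],[w, M]] satisfy A·N = Id and N·A = Id. Let D ∈ ℝ^{d×d} be a diagonal matrix with strictly positive diagonal entries and let v₀ > 0. Then the matrix v₀ w wᵀ + M D Mᵀ is invertible and p + (v₀ w wᵀ + M D Mᵀ)^{−1} w v₀ = p + ((Id − B_X)ᵀ − p cᵀ) D^{−1} c · (1 − (v₀ cᵀ D^{−1} c)/(1 + v₀ cᵀ D^{−1} c)) · v₀. -/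
/-!
The block equations of `N * A = 1` say that `M` is invertible with inverse
`E = (1 - B_X) - c pᵀ` and that `M c = w`. Hence `v₀ w wᵀ + M D Mᵀ` is positive definite, and it
maps `Eᵀ D⁻¹ c` to `(1 + v₀ cᵀ D⁻¹ c) w`, because `Mᵀ Eᵀ = 1` and `wᵀ Eᵀ = cᵀ`.
-/

open Matrix

theorem mulVec_eq_and_mul_sub_vecMulVec_eq_one_of_fromBlocks_mul_eq_one
    {m R : Type*} [Fintype m] [DecidableEq m] [Ring R]
    {p c v w : m → R} {A M : Matrix m m R}
    (h : fromBlocks (1 : Matrix (Fin 1) (Fin 1) R) (replicateRow (Fin 1) v) (replicateCol (Fin 1) w) M *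
        fromBlocks (1 : Matrix (Fin 1) (Fin 1) R) (-replicateRow (Fin 1) p) (-replicateCol (Fin 1) c) A
        = 1) :
    M *ᵥ c = w ∧ M * (A - vecMulVec c p) = 1 := by
  rw [fromBlocks_multiply, ← fromBlocks_one] at h
  have h₂₁ := congrArg toBlocks₂₁ h
  have h₂₂ := congrArg toBlocks₂₂ h
  simp only [toBlocks_fromBlocks₂₁, toBlocks_fromBlocks₂₂, Matrix.mul_one, Matrix.mul_neg,
    add_neg_eq_zero, neg_add_eq_sub, sub_eq_iff_eq_add] at h₂₁ h₂₂
  have hMc : M * replicateCol (Fin 1) c = replicateCol (Fin 1) w := h₂₁.symm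
  refine ⟨replicateCol_injective (ι := Fin 1) (by rwa [replicateCol_mulVec]), ?_⟩
  rw [vecMulVec_eq (Fin 1), mul_sub, ← Matrix.mul_assoc, hMc, h₂₂]
  exact add_sub_cancel_right _ _

theorem smul_vecMulVec_add_mul_mul_transpose_mulVec {m R : Type*} [Fintype m] [DecidableEq m]
    [CommRing R] {E M D : Matrix m m R} {c w : m → R} (a : R)
    (hEM : E * M = 1) (hMc : M *ᵥ c = w) (hD : IsUnit D.det) :
    (a • vecMulVec w w + M * D * Mᵀ) *ᵥ (Eᵀ *ᵥ (D⁻¹ *ᵥ c)) =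
      (1 + a * (c ⬝ᵥ (D⁻¹ *ᵥ c))) • w := by
  set u := D⁻¹ *ᵥ c
  have hMEu : Mᵀ *ᵥ (Eᵀ *ᵥ u) = u := by
    rw [mulVec_mulVec, ← transpose_mul, hEM, transpose_one, one_mulVec]
  have hwEu : w ⬝ᵥ (Eᵀ *ᵥ u) = c ⬝ᵥ u := by
    rw [dotProduct_mulVec, vecMul_transpose, ← hMc, mulVec_mulVec, hEM, one_mulVec]
  have hDu : D *ᵥ u = c := by
    rw [mulVec_mulVec, mul_nonsing_inv D hD, one_mulVec]
  rw [add_mulVec, smul_mulVec, vecMulVec_mulVec, hwEu, op_smul_eq_smul, ← mulVec_mulVec,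
    ← mulVec_mulVec, hMEu, hDu, hMc, smul_smul, add_smul, one_smul, add_comm]

theorem Matrix.PosDef.smul_vecMulVec_self_add_mul_mul_transpose {m : Type*} [Fintype m]
    [DecidableEq m] {D M : Matrix m m ℝ} (hD : D.PosDef) (hM : IsUnit M) (w : m → ℝ)
    {a : ℝ} (ha : 0 ≤ a) : (a • vecMulVec w w + M * D * Mᵀ).PosDef := by
  have hMDM : (M * D * Mᵀ).PosDef := by
    simpa only [conjTranspose_eq_transpose_of_trivial] using
      hD.mul_mul_conjTranspose_same (vecMul_injective_iff_isUnit.mpr hM)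
  have hww : (vecMulVec w w).PosSemidef := by
    simpa only [star_trivial] using posSemidef_vecMulVec_self_star w
  exact hMDM.posSemidef_add (hww.smul ha)

theorem ols_matrix_identity_general {d : ℕ}
    (p c v w : Fin d → ℝ) (B_X M : Matrix (Fin d) (Fin d) ℝ)
    (hNA : fromBlocks (1 : Matrix (Fin 1) (Fin 1) ℝ) (replicateRow (Fin 1) v) (replicateCol (Fin 1) w) M *
        fromBlocks (1 : Matrix (Fin 1) (Fin 1) ℝ) (-replicateRow (Fin 1) p) (-replicateCol (Fin 1) c)
          ((1 : Matrix (Fin d) (Fin d) ℝ) - B_X) = 1)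
    (dv : Fin d → ℝ) (hdv : ∀ k, 0 < dv k) (D : Matrix (Fin d) (Fin d) ℝ)
    (hD : D = diagonal dv) (v₀ : ℝ) (hv₀ : 0 < v₀) :
    IsUnit (v₀ • vecMulVec w w + M * D * Mᵀ).det ∧
    p + (v₀ • vecMulVec w w + M * D * Mᵀ)⁻¹ *ᵥ (v₀ • w) =
      p + ((1 - (v₀ * (c ⬝ᵥ (D⁻¹ *ᵥ c))) / (1 + v₀ * (c ⬝ᵥ (D⁻¹ *ᵥ c)))) * v₀) •
        ((((1 : Matrix (Fin d) (Fin d) ℝ) - B_X)ᵀ - vecMulVec p c) *ᵥ (D⁻¹ *ᵥ c)) := by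
  obtain ⟨hMc, hME⟩ := mulVec_eq_and_mul_sub_vecMulVec_eq_one_of_fromBlocks_mul_eq_one hNA
  have hEM := mul_eq_one_comm.mp hME
  have hEt : (1 - B_X - vecMulVec c p)ᵀ = (1 - B_X)ᵀ - vecMulVec p c := by
    rw [transpose_sub, transpose_vecMulVec]
  have hDpos : D.PosDef := hD ▸ posDef_diagonal_iff.mpr hdv
  have hγ : 0 ≤ c ⬝ᵥ (D⁻¹ *ᵥ c) := by
    simpa only [star_trivial] using hDpos.inv.posSemidef.dotProduct_mulVec_nonneg c
  have hden : 1 + v₀ * (c ⬝ᵥ (D⁻¹ *ᵥ c)) ≠ 0 := by positivity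
  have hS := hDpos.smul_vecMulVec_self_add_mul_mul_transpose
    ((isUnit_iff_isUnit_det M).mpr (isUnit_det_of_right_inverse hME)) w hv₀.le
  let _ := hS.isUnit.invertible
  refine ⟨(isUnit_iff_isUnit_det _).mp hS.isUnit, congrArg (p + ·) (inv_mulVec_eq_vec ?_)⟩
  rw [← hEt, mulVec_smul, smul_vecMulVec_add_mul_mul_transpose_mulVec v₀ hEM hMc
    ((isUnit_iff_isUnit_det D).mp hDpos.isUnit), smul_smul]
  congr 1
  field_simp
  ring

/-- Central matrix identity in the proof of the Lemma on OLS in linear SCMs: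
`p + (v₀ w wᵀ + M D Mᵀ)⁻¹ w v₀ = p + ((Id − B_X)ᵀ − p cᵀ) D⁻¹ c (1 − v₀cᵀD⁻¹c/(1+v₀cᵀD⁻¹c)) v₀`. -/
theorem ols_matrix_identity {d : ℕ} (hd : 1 ≤ d)
    (p c v w : Fin d → ℝ) (B_X M : Matrix (Fin d) (Fin d) ℝ)
    (hAN : fromBlocks (1 : Matrix (Fin 1) (Fin 1) ℝ) (-replicateRow (Fin 1) p) (-replicateCol (Fin 1) c)
          ((1 : Matrix (Fin d) (Fin d) ℝ) - B_X) *
        fromBlocks (1 : Matrix (Fin 1) (Fin 1) ℝ) (replicateRow (Fin 1) v) (replicateCol (Fin 1) w) M = 1)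
    (hNA : fromBlocks (1 : Matrix (Fin 1) (Fin 1) ℝ) (replicateRow (Fin 1) v) (replicateCol (Fin 1) w) M *
        fromBlocks (1 : Matrix (Fin 1) (Fin 1) ℝ) (-replicateRow (Fin 1) p) (-replicateCol (Fin 1) c)
          ((1 : Matrix (Fin d) (Fin d) ℝ) - B_X) = 1)
    (dv : Fin d → ℝ) (hdv : ∀ k, 0 < dv k) (D : Matrix (Fin d) (Fin d) ℝ)
    (hD : D = diagonal dv) (v₀ : ℝ) (hv₀ : 0 < v₀) :
    IsUnit (v₀ • vecMulVec w w + M * D * Mᵀ).det ∧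
    p + (v₀ • vecMulVec w w + M * D * Mᵀ)⁻¹ *ᵥ (v₀ • w) =
      p + ((1 - (v₀ * (c ⬝ᵥ (D⁻¹ *ᵥ c))) / (1 + v₀ * (c ⬝ᵥ (D⁻¹ *ᵥ c)))) * v₀) •
        ((((1 : Matrix (Fin d) (Fin d) ℝ) - B_X)ᵀ - vecMulVec p c) *ᵥ (D⁻¹ *ᵥ c)) :=
  ols_matrix_identity_general p c v w B_X M hNA dv hdv D hD v₀ hv₀
end

section
/- Let d ≥ 1 and let ε⁰, ε¹, …, ε^d be independent square-integrable real random variables with Var(ε^k) > 0 for k = 1, …, d; set v₀ := Var(ε⁰) and D := diag(Var(ε¹), …, Var(ε^d)). Let B ∈ ℝ^{(d+1)×(d+1)} have the block form B = [[0, pᵀ],[c, B_X]] with p, c ∈ ℝ^d and B_X ∈ ℝ^{d×d}, and suppose there is a strict total order on the indices {0, 1, …, d} such that B_{ij} ≠ 0 only when j precedes i (acyclicity), so that Id − B is invertible. Define the random vector (Y, X¹, …, X^d)ᵀ := (Id − B)^{−1}(ε⁰, ε¹, …, ε^d)ᵀ. Let Σ_X ∈ ℝ^{d×d} be the matrix with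 entries (Σ_X)_{ij} = Cov(X^i, X^j) and assume Σ_X is invertible. Then the population ordinary least squares coefficient β^{OLS} := Σ_X^{−1}·(Cov(X^1, Y), …, Cov(X^d, Y))ᵀ satisfies β^{OLS} = p + ((Id − B_X)ᵀ − p cᵀ) D^{−1} c · (1 − (v₀ cᵀ D^{−1} c)/(1 + v₀ cᵀ D^{−1} c)) · v₀. -/
open Matrix MeasureTheory ProbabilityTheory

/-- Covariance of two real random variables: `Cov(U,V) = E[UV] − E[U]E[V]`. -/
noncomputable def cov {Ω : Type*} [MeasurableSpace Ω] (μ : Measure Ω) (U V : Ω → ℝ) : ℝ :=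
  (∫ ω, U ω * V ω ∂μ) - (∫ ω, U ω ∂μ) * (∫ ω, V ω ∂μ)

lemma cov_lincomb {Ω : Type*} [MeasurableSpace Ω] (μ : Measure Ω) [IsProbabilityMeasure μ]
    {n : ℕ} (ε : Fin n → Ω → ℝ) (hmeas : ∀ i, Measurable (ε i))
    (hindep : iIndepFun ε μ)
    (hL2 : ∀ i, MemLp (ε i) 2 μ) (u w : Fin n → ℝ) :
    cov μ (fun ω => ∑ k, u k * ε k ω) (fun ω => ∑ k, w k * ε k ω)
      = ∑ k, u k * w k * cov μ (ε k) (ε k) := by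
  have hint : ∀ i, Integrable (ε i) μ := fun i => (hL2 i).integrable one_le_two
  have hprod : ∀ i j, Integrable (fun ω => ε i ω * ε j ω) μ := by
    intro i j
    rcases eq_or_ne i j with rfl | hij
    · simpa [pow_two] using (hL2 i).integrable_sq
    · exact (hindep.indepFun hij).integrable_mul (hint i) (hint j)
  have hq : ∀ i j, i ≠ j → (∫ ω, ε i ω * ε j ω ∂μ) = (∫ ω, ε i ω ∂μ) * (∫ ω, ε j ω ∂μ) := by
    intro i j hij
    exact (hindep.indepFun hij).integral_mul_eq_mul_integral (hmeas i).aestronglyMeasurable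
      (hmeas j).aestronglyMeasurable
  have hm : ∀ u : Fin n → ℝ, (∫ ω, (∑ k, u k * ε k ω) ∂μ) = ∑ k, u k * ∫ ω, ε k ω ∂μ := by
    intro u
    rw [integral_finset_sum _ (fun k _ => ((hint k).const_mul (u k)))]
    exact Finset.sum_congr rfl fun k _ => integral_const_mul _ _
  have hmul : (∫ ω, (∑ k, u k * ε k ω) * (∑ k, w k * ε k ω) ∂μ)
      = ∑ i, ∑ j, u i * w j * ∫ ω, ε i ω * ε j ω ∂μ := by
    have hrw : ∀ ω : Ω, (∑ k, u k * ε k ω) * (∑ k, w k * ε k ω)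
        = ∑ i, ∑ j, u i * w j * (ε i ω * ε j ω) := by
      intro ω
      rw [Finset.sum_mul_sum]
      exact Finset.sum_congr rfl fun i _ => Finset.sum_congr rfl fun j _ => by ring
    simp_rw [hrw]
    rw [integral_finset_sum _ (fun i _ =>
      integrable_finset_sum _ (fun j _ => ((hprod i j).const_mul _)))]
    refine Finset.sum_congr rfl fun i _ => ?_
    rw [integral_finset_sum _ (fun j _ => ((hprod i j).const_mul _))]
    exact Finset.sum_congr rfl fun j _ => integral_const_mul _ _
  simp only [cov, hm, hmul]
  rw [Finset.sum_mul_sum, ← Finset.sum_sub_distrib]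
  refine Finset.sum_congr rfl fun i _ => ?_
  rw [← Finset.sum_sub_distrib, Finset.sum_eq_single i]
  · ring
  · intro j _ hji
    rw [hq i j (Ne.symm hji)]
    ring
  · intro h; exact absurd (Finset.mem_univ i) h

lemma vecMulVec_mulVec' {d : ℕ} (u v x : Fin d → ℝ) :
    vecMulVec u v *ᵥ x = (v ⬝ᵥ x) • u := by
  ext i
  simp only [Matrix.mulVec, dotProduct, Matrix.vecMulVec_apply, Pi.smul_apply,
    smul_eq_mul]
  rw [Finset.sum_mul]
  exact Finset.sum_congr rfl fun j _ => by ring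

lemma vecMul_vecMulVec' {d : ℕ} (x u v : Fin d → ℝ) :
    x ᵥ* vecMulVec u v = (x ⬝ᵥ u) • v := by
  ext j
  simp only [Matrix.vecMul, dotProduct, Matrix.vecMulVec_apply, Pi.smul_apply,
    smul_eq_mul]
  rw [Finset.sum_mul]
  exact Finset.sum_congr rfl fun i _ => by ring

lemma ols_algebra {d : ℕ} (a b c p : Fin d → ℝ) (y₀ v₀ : ℝ)
    (G N : Matrix (Fin d) (Fin d) ℝ) (e : Fin d → ℝ)
    (he : ∀ k, 0 < e k) (hv : 0 ≤ v₀)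
    (h1 : G *ᵥ c = a)
    (h2 : N *ᵥ a = y₀ • c)
    (h3 : N * G = 1 + vecMulVec c b)
    (h4 : p ᵥ* G = b)
    (h5 : y₀ = 1 + p ⬝ᵥ a)
    (SX : Matrix (Fin d) (Fin d) ℝ)
    (hSX : SX = v₀ • vecMulVec a a + G * diagonal e * Gᵀ) :
    SX *ᵥ (p + ((1 - (v₀ * (c ⬝ᵥ ((diagonal e)⁻¹ *ᵥ c))) / (1 + v₀ * (c ⬝ᵥ ((diagonal e)⁻¹ *ᵥ c)))) * v₀) •
        ((Nᵀ - vecMulVec p c) *ᵥ ((diagonal e)⁻¹ *ᵥ c)))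
      = (v₀ * y₀) • a + G *ᵥ (e * b) := by
  have hd : (diagonal e)⁻¹ = diagonal (fun k => (e k)⁻¹) := by
    apply Matrix.inv_eq_right_inv
    rw [Matrix.diagonal_mul_diagonal]
    rw [show (fun k => e k * (e k)⁻¹) = fun _ => (1:ℝ) from
      funext fun k => mul_inv_cancel₀ (he k).ne', Matrix.diagonal_one]
  have hDinv : (diagonal e)⁻¹ *ᵥ c = fun k => (e k)⁻¹ * c k := by
    rw [hd]; ext k; rw [Matrix.mulVec_diagonal]
  rw [hDinv]
  set Dc : Fin d → ℝ := fun k => (e k)⁻¹ * c k with hDc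
  set t : ℝ := c ⬝ᵥ Dc with ht
  have ht0 : 0 ≤ t := by
    rw [ht, hDc]
    simp only [dotProduct]
    refine Finset.sum_nonneg fun k _ => ?_
    have h := (he k).le
    have : c k * ((e k)⁻¹ * c k) = (c k)^2 * (e k)⁻¹ := by ring
    rw [this]
    positivity
  have hs : 0 < 1 + v₀ * t := by nlinarith [mul_nonneg hv ht0]
  -- generic product with SX
  have hSXmul : ∀ z, SX *ᵥ z = (v₀ * (a ⬝ᵥ z)) • a + G *ᵥ (diagonal e *ᵥ (z ᵥ* G)) := by
    intro z
    rw [hSX, Matrix.add_mulVec, Matrix.smul_mulVec, vecMulVec_mulVec', smul_smul,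
      ← Matrix.mulVec_mulVec, ← Matrix.mulVec_mulVec, Matrix.mulVec_transpose]
  have hDeb : diagonal e *ᵥ b = e * b := by
    ext k; rw [Matrix.mulVec_diagonal]; rfl
  have hSXp : SX *ᵥ p = (v₀ * (a ⬝ᵥ p)) • a + G *ᵥ (e * b) := by
    rw [hSXmul, h4, hDeb]
  have hNDc : a ⬝ᵥ (Nᵀ *ᵥ Dc) = y₀ * t := by
    rw [Matrix.dotProduct_mulVec, Matrix.vecMul_transpose, h2, smul_dotProduct,
      smul_eq_mul, ht, dotProduct_comm]
  have hGN : (Nᵀ *ᵥ Dc) ᵥ* G = Dc + t • b := by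
    rw [Matrix.mulVec_transpose, Matrix.vecMul_vecMul, h3, Matrix.vecMul_add,
      Matrix.vecMul_one, vecMul_vecMulVec', dotProduct_comm Dc c]
  have hDeDc : diagonal e *ᵥ Dc = c := by
    ext k
    rw [Matrix.mulVec_diagonal, hDc]
    exact mul_inv_cancel_left₀ (he k).ne' (c k)
  have hSXn : SX *ᵥ (Nᵀ *ᵥ Dc) = (v₀ * (y₀ * t)) • a + (a + t • (G *ᵥ (e * b))) := by
    rw [hSXmul, hNDc, hGN, Matrix.mulVec_add, Matrix.mulVec_smul, hDeDc, Matrix.mulVec_add,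
      Matrix.mulVec_smul, hDeb, h1]
  have hw : (Nᵀ - vecMulVec p c) *ᵥ Dc = Nᵀ *ᵥ Dc - t • p := by
    rw [Matrix.sub_mulVec, vecMulVec_mulVec']
  rw [hw, Matrix.mulVec_add, Matrix.mulVec_smul, Matrix.mulVec_sub, Matrix.mulVec_smul,
    hSXn, hSXp, dotProduct_comm a p]
  ext i
  simp only [Pi.add_apply, Pi.smul_apply, Pi.sub_apply, smul_eq_mul]
  rw [h5]
  field_simp
  ring

/-- **OLS in linear SCMs.** In a linear acyclic SCM `(Y,X)ᵀ = B (Y,X)ᵀ + ε` with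
`B = [[0, pᵀ],[c, B_X]]`, the population OLS coefficient equals
`p + ((Id − B_X)ᵀ − p cᵀ) D⁻¹ c (1 − v₀cᵀD⁻¹c/(1+v₀cᵀD⁻¹c)) v₀`. -/
theorem ols_in_linear_SCM {Ω : Type*} [MeasurableSpace Ω] (μ : Measure Ω)
    [IsProbabilityMeasure μ] {d : ℕ} (hd : 1 ≤ d)
    (ε : Fin (d + 1) → Ω → ℝ) (hmeas : ∀ i, Measurable (ε i))
    (hindep : iIndepFun ε μ)
    (hL2 : ∀ i, MemLp (ε i) 2 μ)
    (hvarpos : ∀ k : Fin d, 0 < cov μ (ε k.succ) (ε k.succ))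
    (v₀ : ℝ) (hv₀ : v₀ = cov μ (ε 0) (ε 0))
    (D : Matrix (Fin d) (Fin d) ℝ) (hD : D = diagonal fun k => cov μ (ε k.succ) (ε k.succ))
    (B : Matrix (Fin (d + 1)) (Fin (d + 1)) ℝ)
    (p c : Fin d → ℝ) (B_X : Matrix (Fin d) (Fin d) ℝ)
    (hB00 : B 0 0 = 0) (hBp : ∀ j : Fin d, B 0 j.succ = p j)
    (hBc : ∀ i : Fin d, B i.succ 0 = c i)
    (hBX : ∀ i j : Fin d, B i.succ j.succ = B_X i j)
    (hacyclic : ∃ r : Fin (d + 1) → Fin (d + 1) → Prop,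
      IsStrictTotalOrder (Fin (d + 1)) r ∧ ∀ i j, B i j ≠ 0 → r j i)
    (Y : Ω → ℝ)
    (hY : ∀ ω, Y ω = ∑ k : Fin (d + 1), ((1 : Matrix (Fin (d + 1)) (Fin (d + 1)) ℝ) - B)⁻¹ 0 k * ε k ω)
    (X : Fin d → Ω → ℝ)
    (hX : ∀ j ω, X j ω =
      ∑ k : Fin (d + 1), ((1 : Matrix (Fin (d + 1)) (Fin (d + 1)) ℝ) - B)⁻¹ j.succ k * ε k ω)
    (SX : Matrix (Fin d) (Fin d) ℝ) (hSX : ∀ i j, SX i j = cov μ (X i) (X j))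
    (hSXinv : IsUnit SX.det) :
    SX⁻¹ *ᵥ (fun i => cov μ (X i) Y) =
      p + ((1 - (v₀ * (c ⬝ᵥ (D⁻¹ *ᵥ c))) / (1 + v₀ * (c ⬝ᵥ (D⁻¹ *ᵥ c)))) * v₀) •
        ((((1 : Matrix (Fin d) (Fin d) ℝ) - B_X)ᵀ - vecMulVec p c) *ᵥ (D⁻¹ *ᵥ c)) := by
  clear hacyclic
  set A : Matrix (Fin (d + 1)) (Fin (d + 1)) ℝ :=
    ((1 : Matrix (Fin (d + 1)) (Fin (d + 1)) ℝ) - B)⁻¹ with hA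
  set e : Fin d → ℝ := fun k => cov μ (ε k.succ) (ε k.succ) with he'
  set N : Matrix (Fin d) (Fin d) ℝ := (1 : Matrix (Fin d) (Fin d) ℝ) - B_X with hN
  have he : ∀ k, 0 < e k := fun k => hvarpos k
  set var : Fin (d + 1) → ℝ := fun k => cov μ (ε k) (ε k) with hvar
  -- covariance formulas
  have covXX : ∀ i j : Fin d, cov μ (X i) (X j)
      = ∑ k, A i.succ k * A j.succ k * var k := by
    intro i j
    rw [show X i = fun ω => ∑ k, A i.succ k * ε k ω from funext fun ω => hX i ω,
      show X j = fun ω => ∑ k, A j.succ k * ε k ω from funext fun ω => hX j ω]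
    exact cov_lincomb μ ε hmeas hindep hL2 _ _
  have covXY : ∀ i : Fin d, cov μ (X i) Y
      = ∑ k, A i.succ k * A 0 k * var k := by
    intro i
    rw [show X i = fun ω => ∑ k, A i.succ k * ε k ω from funext fun ω => hX i ω,
      show Y = fun ω => ∑ k, A 0 k * ε k ω from funext fun ω => hY ω]
    exact cov_lincomb μ ε hmeas hindep hL2 _ _
  -- v₀ is nonnegative
  have hv0 : 0 ≤ v₀ := by
    rw [hv₀]
    have hvv : cov μ (ε 0) (ε 0) = variance (ε 0) μ := by
      rw [variance_eq_sub (hL2 0), cov]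
      congr 1
      · exact integral_congr_ae (Filter.Eventually.of_forall fun ω => by simp [pow_two])
      · rw [pow_two]
    rw [hvv]
    exact variance_nonneg _ _
  -- invertibility of 1 - B
  have hMunit : IsUnit ((1 : Matrix (Fin (d + 1)) (Fin (d + 1)) ℝ) - B).det := by
    by_contra hcon
    have hA0 : A = 0 := by rw [hA]; exact Matrix.nonsing_inv_apply_not_isUnit _ hcon
    have hXzero : ∀ j ω, X j ω = 0 := by
      intro j ω; rw [hX j ω, hA0]; simp
    have hSX0 : SX = 0 := by
      ext i j
      rw [hSX i j]
      simp [cov, hXzero]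
    rw [hSX0] at hSXinv
    haveI : Nonempty (Fin d) := ⟨⟨0, hd⟩⟩
    rw [Matrix.det_zero] at hSXinv
    exact hSXinv.ne_zero rfl
  have hMA : ((1 : Matrix (Fin (d + 1)) (Fin (d + 1)) ℝ) - B) * A = 1 :=
    Matrix.mul_nonsing_inv _ hMunit
  have hAM : A * ((1 : Matrix (Fin (d + 1)) (Fin (d + 1)) ℝ) - B) = 1 :=
    Matrix.nonsing_inv_mul _ hMunit
  have entry_MA : ∀ i j, ∑ k, ((1 : Matrix (Fin (d + 1)) (Fin (d + 1)) ℝ) - B) i k * A k j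
      = (1 : Matrix (Fin (d + 1)) (Fin (d + 1)) ℝ) i j := by
    intro i j; rw [← Matrix.mul_apply, hMA]
  have entry_AM : ∀ i j, ∑ k, A i k * ((1 : Matrix (Fin (d + 1)) (Fin (d + 1)) ℝ) - B) k j
      = (1 : Matrix (Fin (d + 1)) (Fin (d + 1)) ℝ) i j := by
    intro i j; rw [← Matrix.mul_apply, hAM]
  -- entries of 1 - B
  have hM00 : ((1 : Matrix (Fin (d + 1)) (Fin (d + 1)) ℝ) - B) 0 0 = 1 := by
    simp [Matrix.sub_apply, hB00]
  have hM0s : ∀ j : Fin d, ((1 : Matrix (Fin (d + 1)) (Fin (d + 1)) ℝ) - B) 0 j.succ = -p j := by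
    intro j
    rw [Matrix.sub_apply, Matrix.one_apply_ne (Ne.symm (Fin.succ_ne_zero j)), hBp j]
    ring
  have hMs0 : ∀ i : Fin d, ((1 : Matrix (Fin (d + 1)) (Fin (d + 1)) ℝ) - B) i.succ 0 = -c i := by
    intro i
    rw [Matrix.sub_apply, Matrix.one_apply_ne (Fin.succ_ne_zero i), hBc i]
    ring
  have hMss : ∀ i j : Fin d,
      ((1 : Matrix (Fin (d + 1)) (Fin (d + 1)) ℝ) - B) i.succ j.succ = N i j := by
    intro i j
    rw [Matrix.sub_apply, hBX i j, hN, Matrix.sub_apply]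
    congr 1
    simp [Matrix.one_apply, Fin.succ_inj]
  -- block identities
  set a : Fin d → ℝ := fun i => A i.succ 0 with ha
  set b : Fin d → ℝ := fun j => A 0 j.succ with hb
  set y₀ : ℝ := A 0 0 with hy₀
  set G : Matrix (Fin d) (Fin d) ℝ := Matrix.of (fun i j => A i.succ j.succ) with hG
  have hGapp : ∀ i j, G i j = A i.succ j.succ := fun i j => rfl
  have h1 : G *ᵥ c = a := by
    funext i
    have h := entry_AM i.succ 0
    rw [Fin.sum_univ_succ, Matrix.one_apply_ne (Fin.succ_ne_zero i), hM00] at h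
    simp only [hMs0, mul_one, mul_neg, Finset.sum_neg_distrib] at h
    simp only [Matrix.mulVec, dotProduct, hGapp, ha]
    linarith
  have h2 : N *ᵥ a = y₀ • c := by
    funext i
    have h := entry_MA i.succ 0
    rw [Fin.sum_univ_succ, Matrix.one_apply_ne (Fin.succ_ne_zero i), hMs0] at h
    simp only [hMss, neg_mul] at h
    simp only [Matrix.mulVec, dotProduct, Pi.smul_apply, smul_eq_mul, ha, hy₀]
    linarith
  have h3 : N * G = 1 + vecMulVec c b := by
    ext i j
    have h := entry_MA i.succ j.succ
    rw [Fin.sum_univ_succ, hMs0] at h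
    simp only [hMss, neg_mul] at h
    rw [show (1 : Matrix (Fin (d + 1)) (Fin (d + 1)) ℝ) i.succ j.succ
        = (1 : Matrix (Fin d) (Fin d) ℝ) i j by
      simp [Matrix.one_apply, Fin.succ_inj]] at h
    simp only [Matrix.mul_apply, Matrix.add_apply, Matrix.vecMulVec_apply, hGapp, hb]
    linarith
  have h4 : p ᵥ* G = b := by
    funext j
    have h := entry_MA 0 j.succ
    rw [Fin.sum_univ_succ, Matrix.one_apply_ne (Ne.symm (Fin.succ_ne_zero j)), hM00] at h
    simp only [hM0s, neg_mul, one_mul, Finset.sum_neg_distrib] at h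
    simp only [Matrix.vecMul, dotProduct, hGapp, hb]
    linarith
  have h5 : y₀ = 1 + p ⬝ᵥ a := by
    have h := entry_MA 0 0
    rw [Fin.sum_univ_succ, Matrix.one_apply_eq, hM00] at h
    simp only [hM0s, neg_mul, one_mul, Finset.sum_neg_distrib] at h
    simp only [dotProduct, hy₀, ha]
    linarith
  -- covariance matrix in block form
  have hvare : ∀ k : Fin d, var k.succ = e k := fun _ => rfl
  have hvar0 : var (0 : Fin (d + 1)) = cov μ (ε 0) (ε 0) := rfl
  have hai : ∀ i, a i = A i.succ 0 := fun _ => rfl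
  have hbi : ∀ j, b j = A 0 j.succ := fun _ => rfl
  have SXeq : SX = v₀ • vecMulVec a a + G * diagonal e * Gᵀ := by
    ext i j
    rw [hSX i j, covXX i j, Fin.sum_univ_succ, Matrix.add_apply, Matrix.smul_apply,
      Matrix.vecMulVec_apply, smul_eq_mul, Matrix.mul_apply]
    congr 1
    · rw [hvar0, ← hv₀, hai, hai]; ring
    · refine Finset.sum_congr rfl fun k _ => ?_
      rw [Matrix.mul_diagonal, Matrix.transpose_apply, hGapp, hGapp, hvare]
      ring
  have covXYeq : (fun i => cov μ (X i) Y) = (v₀ * y₀) • a + G *ᵥ (e * b) := by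
    funext i
    rw [covXY i, Fin.sum_univ_succ, Pi.add_apply, Pi.smul_apply, smul_eq_mul]
    simp only [Matrix.mulVec, dotProduct, Pi.mul_apply]
    congr 1
    · rw [hvar0, ← hv₀, hai, ← hy₀]; ring
    · refine Finset.sum_congr rfl fun k _ => ?_
      rw [hGapp, hvare, hbi]
      ring
  have key := ols_algebra a b c p y₀ v₀ G N e he hv0 h1 h2 h3 h4 h5 SX SXeq
  rw [hD, covXYeq, ← key, Matrix.mulVec_mulVec, Matrix.nonsing_inv_mul _ hSXinv,
    Matrix.one_mulVec]
end

section
/- Let d ≥ 1, let p, c ∈ ℝ^d, B_X ∈ ℝ^{d×d}, let D ∈ ℝ^{d×d} be diagonal with strictly positive diagonal entries D_{kk}, let v₀ > 0, set K := (1 − (v₀ cᵀ D^{−1} c)/(1 + v₀ cᵀ D^{−1} c))·v₀, and define β := p + ((Id − B_X)ᵀ − p cᵀ) D^{−1} c · K. Then for every j ∈ {1, …, d}: |β_j − p_j| ≤ Σ_{k=1}^{d} |((Id − B_X)_{k,j} − p_j c_k)·c_k| · (2 v₀)/D_{kk}. -/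
open Matrix Finset

/-- Coordinatewise bound on the correction term of the population OLS coefficient:
`|β_j − p_j| ≤ Σ_k |((Id − B_X)_{k,j} − p_j c_k) c_k| · 2v₀ / D_{kk}`. -/
theorem ols_coordinate_bound {d : ℕ} (hd : 1 ≤ d)
    (p c : Fin d → ℝ) (B_X : Matrix (Fin d) (Fin d) ℝ)
    (dv : Fin d → ℝ) (hdv : ∀ k, 0 < dv k) (D : Matrix (Fin d) (Fin d) ℝ)
    (hD : D = diagonal dv) (v₀ : ℝ) (hv₀ : 0 < v₀) (K : ℝ)
    (hK : K = (1 - (v₀ * (c ⬝ᵥ (D⁻¹ *ᵥ c))) / (1 + v₀ * (c ⬝ᵥ (D⁻¹ *ᵥ c)))) * v₀)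
    (β : Fin d → ℝ)
    (hβ : β = p + K • ((((1 : Matrix (Fin d) (Fin d) ℝ) - B_X)ᵀ - vecMulVec p c) *ᵥ (D⁻¹ *ᵥ c))) :
    ∀ j : Fin d,
      |β j - p j| ≤
        ∑ k : Fin d,
          |(((1 : Matrix (Fin d) (Fin d) ℝ) - B_X) k j - p j * c k) * c k| * (2 * v₀ / dv k) := by
  intro j
  subst hD
  have hne : ∀ k, dv k ≠ 0 := fun k => (hdv k).ne'
  have hinv : (diagonal dv)⁻¹ = diagonal (fun k => (dv k)⁻¹) := by
    apply Matrix.inv_eq_right_inv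
    rw [Matrix.diagonal_mul_diagonal]
    have h1 : (fun i => dv i * (dv i)⁻¹) = fun _ => (1 : ℝ) :=
      funext fun k => mul_inv_cancel₀ (hne k)
    rw [h1]
    exact Matrix.diagonal_one
  have hmv : ∀ k, ((diagonal dv)⁻¹ *ᵥ c) k = (dv k)⁻¹ * c k := by
    intro k
    rw [hinv, Matrix.mulVec_diagonal]
  -- s := c ⬝ᵥ D⁻¹ c ≥ 0
  set s : ℝ := c ⬝ᵥ ((diagonal dv)⁻¹ *ᵥ c) with hs
  have hs0 : 0 ≤ s := by
    rw [hs]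
    unfold dotProduct
    apply Finset.sum_nonneg
    intro k _
    rw [hmv k]
    have := (hdv k).le
    have h1 : 0 ≤ (dv k)⁻¹ := inv_nonneg.mpr this
    nlinarith [sq_nonneg (c k)]
  have ht0 : 0 ≤ v₀ * s := mul_nonneg hv₀.le hs0
  have h1t : 0 < 1 + v₀ * s := by linarith
  have hKle : |K| ≤ 2 * v₀ := by
    rw [hK]
    have hfrac0 : 0 ≤ v₀ * s / (1 + v₀ * s) := div_nonneg ht0 h1t.le
    have hfrac1 : v₀ * s / (1 + v₀ * s) ≤ 1 := by
      rw [div_le_one h1t]; linarith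
    rw [abs_mul, abs_of_pos hv₀]
    have : |1 - v₀ * s / (1 + v₀ * s)| ≤ 1 := by
      rw [abs_le]; constructor <;> linarith
    nlinarith
  -- compute the coordinate
  have hcoord : β j - p j =
      K * ∑ k : Fin d,
        ((((1 : Matrix (Fin d) (Fin d) ℝ) - B_X) k j - p j * c k) * ((dv k)⁻¹ * c k)) := by
    rw [hβ]
    simp only [Pi.add_apply, Pi.smul_apply, smul_eq_mul, add_sub_cancel_left]
    congr 1
    rw [hinv]
    simp only [Matrix.mulVec_diagonal, Matrix.mulVec, dotProduct]
    apply Finset.sum_congr rfl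
    intro k _
    rcases eq_or_ne j k with h | h
    · subst h
      simp [Matrix.one_apply, Matrix.diagonal_apply, ite_mul, Finset.sum_ite_eq, Matrix.vecMulVec_apply]
    · simp [Matrix.one_apply, Matrix.diagonal_apply, ite_mul, Finset.sum_ite_eq, Matrix.vecMulVec_apply, h, Ne.symm h]
  rw [hcoord, abs_mul]
  calc |K| * |∑ k : Fin d,
        ((((1 : Matrix (Fin d) (Fin d) ℝ) - B_X) k j - p j * c k) * ((dv k)⁻¹ * c k))|
      ≤ (2 * v₀) * ∑ k : Fin d,
        |(((1 : Matrix (Fin d) (Fin d) ℝ) - B_X) k j - p j * c k) * c k| * (dv k)⁻¹ := by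
        apply mul_le_mul hKle _ (abs_nonneg _) (by linarith)
        refine le_trans (Finset.abs_sum_le_sum_abs _ _) ?_
        apply Finset.sum_le_sum
        intro k _
        rw [abs_mul, abs_mul, abs_of_nonneg (inv_nonneg.mpr (hdv k).le)]
        rw [abs_mul]
        ring_nf
        exact le_rfl
    _ = ∑ k : Fin d,
        |(((1 : Matrix (Fin d) (Fin d) ℝ) - B_X) k j - p j * c k) * c k| * (2 * v₀ / dv k) := by
        rw [Finset.mul_sum]
        apply Finset.sum_congr rfl
        intro k _
        field_simp
end

section
/- Let d ≥ 1, let p, c ∈ ℝ^d, B_X ∈ ℝ^{d×d}, let D ∈ ℝ^{d×d} be diagonal with strictly positive diagonal entries, let v₀ > 0, set K := (1 − (v₀ cᵀ D^{−1} c)/(1 + v₀ cᵀ D^{−1} c))·v₀, and define β := p + ((Id − B_X)ᵀ − p cᵀ) D^{−1} c · K. If j ∈ {1, …, d} satisfies p_j = 0, c_j = 0, and (B_X)_{k,j}·c_k = 0 for every k ∈ {1, …, d}, then β_j = 0. -/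
/-! The `j`-th entry of `((I - B)ᵀ - p cᵀ) w` is `w_j - ∑ₖ w_k B_kj - p_j (c ⬝ w)`. For
`w = D⁻¹ c` with `D` diagonal, `w` is supported where `c` is, so all three terms vanish when
`p_j = 0`, `c_j = 0` and `B_kj c_k = 0`. -/

open Matrix

section

variable {n R : Type*} [Fintype n] [DecidableEq n]

theorem one_sub_transpose_sub_vecMulVec_mulVec_apply [CommRing R] (B : Matrix n n R)
    (p c w : n → R) (j : n) :
    (((1 - B)ᵀ - vecMulVec p c) *ᵥ w) j = w j - ∑ k, w k * B k j - p j * (c ⬝ᵥ w) := by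
  simp only [sub_mulVec, mulVec_transpose, vecMul_sub, vecMul_one, vecMulVec_mulVec,
    Pi.sub_apply, Pi.smul_apply, vecMul, dotProduct, MulOpposite.smul_eq_mul_unop,
    MulOpposite.unop_op]

theorem inv_diagonal_mulVec_apply [CommRing R] (v c : n → R) (k : n) :
    ((diagonal v)⁻¹ *ᵥ c) k = Ring.inverse v k * c k := by
  rw [inv_diagonal, mulVec_diagonal]

end

theorem ols_outside_markov_blanket_general {d : ℕ}
    (p c : Fin d → ℝ) (B_X : Matrix (Fin d) (Fin d) ℝ)
    (dv : Fin d → ℝ) (D : Matrix (Fin d) (Fin d) ℝ)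
    (hD : D = diagonal dv) (K : ℝ)
    (β : Fin d → ℝ)
    (hβ : β = p + K • ((((1 : Matrix (Fin d) (Fin d) ℝ) - B_X)ᵀ - vecMulVec p c) *ᵥ (D⁻¹ *ᵥ c)))
    (j : Fin d) (hpj : p j = 0) (hcj : c j = 0) (hBj : ∀ k : Fin d, B_X k j * c k = 0) :
    β j = 0 := by
  subst hβ hD
  have hBw (k : Fin d) : ((diagonal dv)⁻¹ *ᵥ c) k * B_X k j = 0 := by
    rw [inv_diagonal_mulVec_apply, mul_comm, ← mul_assoc, mul_right_comm, hBj, zero_mul]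
  rw [Pi.add_apply, Pi.smul_apply, one_sub_transpose_sub_vecMulVec_mulVec_apply,
    Finset.sum_eq_zero fun k _ => hBw k, inv_diagonal_mulVec_apply, hcj, hpj]
  simp

/-- If `X^j` lies outside the Markov blanket (`p_j = 0`, `c_j = 0`, and
`(B_X)_{k,j} c_k = 0` for all `k`), then the population OLS coefficient `β_j` vanishes. -/
theorem ols_outside_markov_blanket {d : ℕ} (hd : 1 ≤ d)
    (p c : Fin d → ℝ) (B_X : Matrix (Fin d) (Fin d) ℝ)
    (dv : Fin d → ℝ) (hdv : ∀ k, 0 < dv k) (D : Matrix (Fin d) (Fin d) ℝ)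
    (hD : D = diagonal dv) (v₀ : ℝ) (hv₀ : 0 < v₀) (K : ℝ)
    (hK : K = (1 - (v₀ * (c ⬝ᵥ (D⁻¹ *ᵥ c))) / (1 + v₀ * (c ⬝ᵥ (D⁻¹ *ᵥ c)))) * v₀)
    (β : Fin d → ℝ)
    (hβ : β = p + K • ((((1 : Matrix (Fin d) (Fin d) ℝ) - B_X)ᵀ - vecMulVec p c) *ᵥ (D⁻¹ *ᵥ c)))
    (j : Fin d) (hpj : p j = 0) (hcj : c j = 0) (hBj : ∀ k : Fin d, B_X k j * c k = 0) :
    β j = 0 :=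
  ols_outside_markov_blanket_general p c B_X dv D hD K β hβ j hpj hcj hBj
end

section
/- Let (Ω, 𝔉, μ) be a probability space, let m be a sub-σ-algebra of 𝔉, let A ∈ 𝔉 be an event with μ(A) > 0, and let Y : Ω → ℝ be an integrable random variable such that the σ-algebra generated by Y and the σ-algebra generated by the event A (i.e., {∅, A, Aᶜ, Ω}) are conditionally independent given m (with respect to μ). Then the conditional expectation of Y given m computed under the conditional probability measure μ(· | A) coincides μ(· | A)-almost everywhere with the conditional expectation of Y given m computed under μ. -/
set_option linter.unnecessarySimpa false

open MeasureTheory ProbabilityTheory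
open scoped NNReal ENNReal

section Aux

variable {Ω : Type*} {m : MeasurableSpace Ω} [F : MeasurableSpace Ω] {μ : Measure Ω}
  [IsProbabilityMeasure μ]

/-- Pull-out lemma: integrating a bounded `m`-measurable factor against a conditional
expectation over an `m`-measurable set. -/
lemma pull_aux (hm : m ≤ F) {h : Ω → ℝ} (hh : StronglyMeasurable[m] h)
    (hbd : ∀ᵐ ω ∂μ, ‖h ω‖ ≤ 1)
    {s : Set Ω} (hs : MeasurableSet[m] s) {f : Ω → ℝ} (hf : Integrable f μ) :
    ∫ ω in s, h ω * (μ[f|m]) ω ∂μ = ∫ ω in s, h ω * f ω ∂μ := by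
  set G : Ω → ℝ := s.indicator h with hG
  have hGsm : StronglyMeasurable[m] G := hh.indicator hs
  have hGbd : ∀ᵐ ω ∂μ, ‖G ω‖ ≤ 1 := by
    filter_upwards [hbd] with ω hω
    by_cases h1 : ω ∈ s <;> simpa [hG, h1] using hω
  have hGf : Integrable (fun ω => G ω * f ω) μ :=
    hf.bdd_mul ((hGsm.mono hm).aestronglyMeasurable) hGbd
  have h1 : μ[(fun ω => G ω * f ω)|m] =ᵐ[μ] fun ω => G ω * (μ[f|m]) ω :=
    condExp_mul_of_stronglyMeasurable_left hGsm hGf hf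
  have e1 : ∀ g : Ω → ℝ, ∫ ω in s, h ω * g ω ∂μ = ∫ ω, G ω * g ω ∂μ := by
    intro g
    have he : (fun ω => G ω * g ω) = s.indicator fun ω => h ω * g ω := by
      funext ω
      by_cases hω : ω ∈ s <;> simp [hG, hω]
    rw [he]
    exact (integral_indicator (hm s hs)).symm
  rw [e1, e1, ← integral_congr_ae h1, integral_condExp hm]

end Aux

section Aux2

variable {Ω : Type*} {m : MeasurableSpace Ω} [F : MeasurableSpace Ω] {μ : Measure Ω}
  [IsProbabilityMeasure μ]

lemma core_aux (hm : m ≤ F) {A : Set Ω} (hA : MeasurableSet A)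
    {Y : Ω → ℝ} (hY : Measurable Y) (hYint : Integrable Y μ)
    (hCI : ∀ S B : Set Ω,
      MeasurableSet[MeasurableSpace.comap Y (inferInstance : MeasurableSpace ℝ)] S →
      MeasurableSet[MeasurableSpace.generateFrom {A}] B →
      (μ[fun ω => S.indicator (fun _ => (1 : ℝ)) ω * B.indicator (fun _ => (1 : ℝ)) ω | m])
        =ᵐ[μ] fun ω =>
          (μ[S.indicator (fun _ => (1 : ℝ)) | m]) ω * (μ[B.indicator (fun _ => (1 : ℝ)) | m]) ω)
    {s : Set Ω} (hs : MeasurableSet[m] s) :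
    ∫ ω in s ∩ A, Y ω ∂μ = ∫ ω in s ∩ A, (μ[Y|m]) ω ∂μ := by
  set h : Ω → ℝ := μ[A.indicator (fun _ => (1 : ℝ))|m] with hh_def
  have hInd : Integrable (A.indicator fun _ => (1 : ℝ)) μ := (integrable_const 1).indicator hA
  have hh_sm : StronglyMeasurable[m] h := stronglyMeasurable_condExp
  have hh_int : Integrable h μ := integrable_condExp
  have h_nonneg : 0 ≤ᵐ[μ] h :=
    condExp_nonneg (Filter.Eventually.of_forall fun ω =>
      Set.indicator_nonneg (fun _ _ => zero_le_one) ω)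
  have h_le_one : h ≤ᵐ[μ] fun _ => (1 : ℝ) := by
    have h1 : μ[(fun _ => (1 : ℝ))|m] = fun _ => (1 : ℝ) := condExp_const hm 1
    have := condExp_mono (μ := μ) (m := m) hInd (integrable_const (1 : ℝ))
      (Filter.Eventually.of_forall fun ω => Set.indicator_le_self' (fun _ _ => zero_le_one) ω |>.trans ?_)
    · rw [h1] at this; exact this
    · exact le_rfl
  have h_bd : ∀ᵐ ω ∂μ, ‖h ω‖ ≤ 1 := by
    filter_upwards [h_nonneg, h_le_one] with ω h0 h1
    have h0' : (0 : ℝ) ≤ h ω := h0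
    rw [Real.norm_eq_abs, abs_le]
    exact ⟨by linarith, h1⟩
  -- right-hand side
  have hU : Integrable (fun ω => (μ[Y|m]) ω * A.indicator (fun _ => (1 : ℝ)) ω) μ := by
    have he : (fun ω => (μ[Y|m]) ω * A.indicator (fun _ => (1 : ℝ)) ω)
        = A.indicator (μ[Y|m]) := by
      funext ω; by_cases hω : ω ∈ A <;> simp [hω]
    rw [he]; exact integrable_condExp.indicator hA
  have hmul : μ[(fun ω => (μ[Y|m]) ω * A.indicator (fun _ => (1 : ℝ)) ω)|m]
      =ᵐ[μ] fun ω => (μ[Y|m]) ω * h ω :=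
    condExp_mul_of_stronglyMeasurable_left stronglyMeasurable_condExp hU hInd
  have eR : ∫ ω in s ∩ A, (μ[Y|m]) ω ∂μ = ∫ ω in s, h ω * (μ[Y|m]) ω ∂μ := by
    calc ∫ ω in s ∩ A, (μ[Y|m]) ω ∂μ
        = ∫ ω in s, A.indicator (μ[Y|m]) ω ∂μ := (setIntegral_indicator hA).symm
      _ = ∫ ω in s, (μ[Y|m]) ω * A.indicator (fun _ => (1 : ℝ)) ω ∂μ :=
          integral_congr_ae (Filter.Eventually.of_forall fun ω => by
            by_cases hω : ω ∈ A <;> simp [hω])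
      _ = ∫ ω in s, (μ[(fun ω => (μ[Y|m]) ω * A.indicator (fun _ => (1 : ℝ)) ω)|m]) ω ∂μ :=
          (setIntegral_condExp hm hU hs).symm
      _ = ∫ ω in s, (μ[Y|m]) ω * h ω ∂μ := integral_congr_ae (ae_restrict_of_ae hmul)
      _ = ∫ ω in s, h ω * (μ[Y|m]) ω ∂μ := by simp_rw [mul_comm]
  -- left-hand side via the measure argument
  have hYle : MeasurableSpace.comap Y (inferInstance : MeasurableSpace ℝ) ≤ F :=
    measurable_iff_comap_le.mp hY
  have hYsm : StronglyMeasurable[MeasurableSpace.comap Y (inferInstance : MeasurableSpace ℝ)] Y :=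
    (Measurable.stronglyMeasurable (measurable_iff_comap_le.mpr le_rfl))
  have hmeasρ : Measurable fun ω => Real.toNNReal (h ω) :=
    ((hh_sm.mono hm).measurable).real_toNNReal
  have key : ∀ S : Set Ω,
      MeasurableSet[MeasurableSpace.comap Y (inferInstance : MeasurableSpace ℝ)] S →
      μ (S ∩ (s ∩ A)) = ∫⁻ ω in S ∩ s, ENNReal.ofReal (h ω) ∂μ := by
    intro S hS
    have hSF : MeasurableSet S := hYle S hS
    have hAB : MeasurableSet[MeasurableSpace.generateFrom {A}] A :=
      MeasurableSpace.measurableSet_generateFrom rfl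
    have hci := hCI S A hS hAB
    have hprod : (fun ω => S.indicator (fun _ => (1 : ℝ)) ω * A.indicator (fun _ => (1 : ℝ)) ω)
        = (S ∩ A).indicator (fun _ => (1 : ℝ)) := by
      funext ω
      by_cases h1 : ω ∈ S <;> by_cases h2 : ω ∈ A <;>
        simp [Set.indicator, h1, h2, Set.mem_inter_iff]
    rw [hprod] at hci
    have hSA_int : Integrable ((S ∩ A).indicator fun _ => (1 : ℝ)) μ :=
      (integrable_const 1).indicator (hSF.inter hA)
    have hS_int : Integrable (S.indicator fun _ => (1 : ℝ)) μ :=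
      (integrable_const 1).indicator hSF
    have hint_eq : ∫ ω in s, (μ[(S ∩ A).indicator (fun _ => (1 : ℝ))|m]) ω ∂μ
        = ∫ ω in s, (μ[S.indicator (fun _ => (1 : ℝ))|m]) ω * h ω ∂μ :=
      integral_congr_ae (ae_restrict_of_ae hci)
    have hleft : ∫ ω in s, (μ[(S ∩ A).indicator (fun _ => (1 : ℝ))|m]) ω ∂μ
        = (μ (s ∩ (S ∩ A))).toReal := by
      rw [setIntegral_condExp hm hSA_int hs, setIntegral_indicator (hSF.inter hA)]
      simp
      rfl
    have hright : ∫ ω in s, (μ[S.indicator (fun _ => (1 : ℝ))|m]) ω * h ω ∂μ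
        = ∫ ω in s ∩ S, h ω ∂μ := by
      calc ∫ ω in s, (μ[S.indicator (fun _ => (1 : ℝ))|m]) ω * h ω ∂μ
          = ∫ ω in s, h ω * (μ[S.indicator (fun _ => (1 : ℝ))|m]) ω ∂μ := by
            simp_rw [mul_comm]
        _ = ∫ ω in s, h ω * S.indicator (fun _ => (1 : ℝ)) ω ∂μ :=
            pull_aux hm hh_sm h_bd hs hS_int
        _ = ∫ ω in s, S.indicator h ω ∂μ :=
            integral_congr_ae (Filter.Eventually.of_forall fun ω => by
              by_cases hω : ω ∈ S <;> simp [hω])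
        _ = ∫ ω in s ∩ S, h ω ∂μ := setIntegral_indicator hSF
    have hreal : (μ (s ∩ (S ∩ A))).toReal = ∫ ω in s ∩ S, h ω ∂μ := by
      rw [← hleft, hint_eq, hright]
    have hofreal : ENNReal.ofReal (∫ ω in s ∩ S, h ω ∂μ)
        = ∫⁻ ω in s ∩ S, ENNReal.ofReal (h ω) ∂μ :=
      ofReal_integral_eq_lintegral_ofReal hh_int.restrict (ae_restrict_of_ae h_nonneg)
    have hfin : μ (s ∩ (S ∩ A)) = ∫⁻ ω in s ∩ S, ENNReal.ofReal (h ω) ∂μ := by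
      rw [← hofreal, ← hreal, ENNReal.ofReal_toReal (measure_ne_top μ _)]
    rw [Set.inter_left_comm, Set.inter_comm S s]
    exact hfin
  set ν₂ : Measure Ω := (μ.restrict s).withDensity (fun ω => ENNReal.ofReal (h ω)) with hν₂
  have htrim : (μ.restrict (s ∩ A)).trim hYle = ν₂.trim hYle := by
    refine @Measure.ext Ω (MeasurableSpace.comap Y (inferInstance : MeasurableSpace ℝ)) _ _
      fun S hS => ?_
    rw [trim_measurableSet_eq hYle hS, trim_measurableSet_eq hYle hS]
    have hSF : MeasurableSet S := hYle S hS
    rw [Measure.restrict_apply hSF, hν₂, withDensity_apply _ hSF,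
      Measure.restrict_restrict hSF]
    exact key S hS
  have eL : ∫ ω in s ∩ A, Y ω ∂μ = ∫ ω in s, h ω * Y ω ∂μ := by
    have h1 : ∫ ω in s ∩ A, Y ω ∂μ = ∫ ω, Y ω ∂ν₂ := by
      calc ∫ ω in s ∩ A, Y ω ∂μ
          = ∫ ω, Y ω ∂((μ.restrict (s ∩ A)).trim hYle) := integral_trim hYle hYsm
        _ = ∫ ω, Y ω ∂(ν₂.trim hYle) := by rw [htrim]
        _ = ∫ ω, Y ω ∂ν₂ := (integral_trim hYle hYsm).symm
    have h2 : ∫ ω, Y ω ∂ν₂ = ∫ ω in s, ((Real.toNNReal (h ω) : ℝ≥0) : ℝ) * Y ω ∂μ := by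
      have hrfl : ν₂ = (μ.restrict s).withDensity
          (fun ω => ((Real.toNNReal (h ω) : ℝ≥0) : ℝ≥0∞)) := rfl
      rw [hrfl, integral_withDensity_eq_integral_smul hmeasρ]
      simp_rw [NNReal.smul_def, smul_eq_mul]
    have h3 : ∫ ω in s, ((Real.toNNReal (h ω) : ℝ≥0) : ℝ) * Y ω ∂μ
        = ∫ ω in s, h ω * Y ω ∂μ := by
      apply integral_congr_ae
      filter_upwards [ae_restrict_of_ae h_nonneg] with ω h0
      rw [Real.coe_toNNReal _ h0]
    rw [h1, h2, h3]
  rw [eL, eR]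
  exact (pull_aux hm hh_sm h_bd hs hYint).symm

end Aux2

section Aux3

variable {Ω : Type*} {m : MeasurableSpace Ω} [F : MeasurableSpace Ω] {μ : Measure Ω}
  [IsProbabilityMeasure μ]

theorem main_aux (hm : m ≤ F) {A : Set Ω} (hA : MeasurableSet A) (hApos : 0 < μ A)
    {Y : Ω → ℝ} (hYint : Integrable Y μ)
    (hCI : ∀ S B : Set Ω,
      MeasurableSet[MeasurableSpace.comap Y (inferInstance : MeasurableSpace ℝ)] S →
      MeasurableSet[MeasurableSpace.generateFrom {A}] B →
      (μ[fun ω => S.indicator (fun _ => (1 : ℝ)) ω * B.indicator (fun _ => (1 : ℝ)) ω | m])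
        =ᵐ[μ] fun ω =>
          (μ[S.indicator (fun _ => (1 : ℝ)) | m]) ω * (μ[B.indicator (fun _ => (1 : ℝ)) | m]) ω) :
    (μ[|A])[Y | m] =ᵐ[μ[|A]] μ[Y | m] := by
  have hAne : μ A ≠ 0 := hApos.ne'
  haveI : IsProbabilityMeasure (μ[|A]) := cond_isProbabilityMeasure hAne
  have hac : μ[|A] ≪ μ := cond_absolutelyContinuous
  -- replace Y by a measurable representative
  set Y' : Ω → ℝ := hYint.1.mk Y with hY'_def
  have hYY' : Y =ᵐ[μ] Y' := hYint.1.ae_eq_mk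
  have hY' : Measurable Y' := hYint.1.stronglyMeasurable_mk.measurable
  have hY'int : Integrable Y' μ := hYint.congr hYY'
  have hCI' : ∀ S B : Set Ω,
      MeasurableSet[MeasurableSpace.comap Y' (inferInstance : MeasurableSpace ℝ)] S →
      MeasurableSet[MeasurableSpace.generateFrom {A}] B →
      (μ[fun ω => S.indicator (fun _ => (1 : ℝ)) ω * B.indicator (fun _ => (1 : ℝ)) ω | m])
        =ᵐ[μ] fun ω =>
          (μ[S.indicator (fun _ => (1 : ℝ)) | m]) ω
            * (μ[B.indicator (fun _ => (1 : ℝ)) | m]) ω := by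
    rintro S B ⟨T, hT, rfl⟩ hB
    have hS2 : MeasurableSet[MeasurableSpace.comap Y (inferInstance : MeasurableSpace ℝ)]
        (Y ⁻¹' T) := ⟨T, hT, rfl⟩
    have hind : (Y' ⁻¹' T).indicator (fun _ => (1 : ℝ))
        =ᵐ[μ] (Y ⁻¹' T).indicator (fun _ => (1 : ℝ)) := by
      filter_upwards [hYY'] with ω hω
      by_cases hmem : Y ω ∈ T
      · rw [Set.indicator_of_mem (by simpa [hω] using hmem),
          Set.indicator_of_mem (by exact hmem)]
      · rw [Set.indicator_of_notMem (by simpa [hω] using hmem),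
          Set.indicator_of_notMem (by exact hmem)]
    have hce : μ[(Y' ⁻¹' T).indicator (fun _ => (1 : ℝ))|m]
        =ᵐ[μ] μ[(Y ⁻¹' T).indicator (fun _ => (1 : ℝ))|m] := condExp_congr_ae hind
    calc μ[fun ω => (Y' ⁻¹' T).indicator (fun _ => (1 : ℝ)) ω
            * B.indicator (fun _ => (1 : ℝ)) ω|m]
        =ᵐ[μ] μ[fun ω => (Y ⁻¹' T).indicator (fun _ => (1 : ℝ)) ω
            * B.indicator (fun _ => (1 : ℝ)) ω|m] :=
          condExp_congr_ae (by filter_upwards [hind] with ω hω; rw [hω])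
      _ =ᵐ[μ] fun ω => (μ[(Y ⁻¹' T).indicator (fun _ => (1 : ℝ))|m]) ω
            * (μ[B.indicator (fun _ => (1 : ℝ))|m]) ω := hCI _ B hS2 hB
      _ =ᵐ[μ] fun ω => (μ[(Y' ⁻¹' T).indicator (fun _ => (1 : ℝ))|m]) ω
            * (μ[B.indicator (fun _ => (1 : ℝ))|m]) ω := by
          filter_upwards [hce] with ω hω; rw [hω]
  -- transfer integrability to the conditional measure
  have hcne : (μ A)⁻¹ ≠ ∞ := by
    simp [ENNReal.inv_ne_top, hAne]
  have hint_cond : ∀ {f : Ω → ℝ}, Integrable f μ → Integrable f (μ[|A]) := by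
    intro f hf
    have : Integrable f ((μ A)⁻¹ • μ.restrict A) := (hf.restrict (s := A)).smul_measure hcne
    exact this
  have hY'int' : Integrable Y' (μ[|A]) := hint_cond hY'int
  -- the defining set-integral property
  have hmain : μ[Y'|m] =ᵐ[μ[|A]] (μ[|A])[Y'|m] := by
    refine ae_eq_condExp_of_forall_setIntegral_eq hm hY'int'
      (fun t ht _ => (hint_cond integrable_condExp).integrableOn)
      (fun t ht _ => ?_)
      (StronglyMeasurable.aestronglyMeasurable stronglyMeasurable_condExp)
    have htF : MeasurableSet t := hm t ht
    have hre : ∀ (g : Ω → ℝ), ∫ ω in t, g ω ∂(μ[|A])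
        = ((μ A)⁻¹).toReal • ∫ ω in t ∩ A, g ω ∂μ := by
      intro g
      show ∫ ω in t, g ω ∂((μ A)⁻¹ • μ.restrict A) = _
      rw [Measure.restrict_smul, integral_smul_measure, Measure.restrict_restrict htF]
    rw [hre, hre, core_aux hm hA hY' hY'int hCI' ht]
  -- put everything together
  have hYY'c : Y =ᵐ[μ[|A]] Y' := hac.ae_eq hYY'
  calc (μ[|A])[Y|m]
      =ᵐ[μ[|A]] (μ[|A])[Y'|m] := condExp_congr_ae hYY'c
    _ =ᵐ[μ[|A]] μ[Y'|m] := hmain.symm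
    _ =ᵐ[μ[|A]] μ[Y|m] := hac.ae_eq (condExp_congr_ae (μ := μ) hYY'.symm)

end Aux3

/-- If `σ(Y)` and the σ-algebra generated by the event `A` are conditionally independent
given `m`, then the conditional expectation of `Y` given `m` under the conditional measure
`μ(·|A)` coincides `μ(·|A)`-a.e. with the one under `μ`. -/
theorem condexp_cond_measure_of_condIndep {Ω : Type*} (m : MeasurableSpace Ω) [F : MeasurableSpace Ω]
    (μ : Measure Ω) [IsProbabilityMeasure μ]
    (hm : m ≤ F)
    (A : Set Ω) (hA : MeasurableSet A) (hApos : 0 < μ A)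
    (Y : Ω → ℝ) (hYint : Integrable Y μ)
    (hCI : ∀ S B : Set Ω,
      MeasurableSet[MeasurableSpace.comap Y (inferInstance : MeasurableSpace ℝ)] S →
      MeasurableSet[MeasurableSpace.generateFrom {A}] B →
      (μ[fun ω => S.indicator (fun _ => (1 : ℝ)) ω * B.indicator (fun _ => (1 : ℝ)) ω | m])
        =ᵐ[μ] fun ω =>
          (μ[S.indicator (fun _ => (1 : ℝ)) | m]) ω * (μ[B.indicator (fun _ => (1 : ℝ)) | m]) ω) :
    (μ[|A])[Y | m] =ᵐ[μ[|A]] μ[Y | m] :=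
  @main_aux Ω m F μ inferInstance hm A hA hApos Y hYint hCI
end

section
/- Let (Ω, 𝔉, μ) be a probability space, let m₁ ⊆ m₂ be sub-σ-algebras of 𝔉, and let Y : Ω → ℝ be square-integrable such that the σ-algebra generated by Y and m₂ are conditionally independent given m₁ (with respect to μ). Then E[(Y − E[Y | m₂])²] = E[(Y − E[Y | m₁])²]. -/
/-!
For `A ∈ σ(Y)` and `B ∈ m₂`, conditional independence and pulling the `m₁`-measurable factor
`E[1_A | m₁]` out of `E[E[1_A | m₁] 1_B | m₁]` give `∫_B 1_A = ∫_B E[1_A | m₁]`. Linearity and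
continuity of `f ↦ ∫_B E[f | m₁]` on `L¹` extend this to every integrable `σ(Y)`-measurable `f`,
so `E[Y | m₁]` satisfies the defining property of `E[Y | m₂]`. The two prediction errors then agree
almost everywhere.
-/

open MeasureTheory ProbabilityTheory

namespace MeasureTheory

/-- Conditional independence of `m₁` and `m₂` given `m'` in the form of
`ProbabilityTheory.condIndep_iff`, but without the standard Borel structure on `Ω` that
`ProbabilityTheory.CondIndep` requires. -/
def CondIndepIndicator {Ω : Type*} (m' m₁ m₂ : MeasurableSpace Ω) [MeasurableSpace Ω]
    (μ : Measure Ω) : Prop :=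
  ∀ A B, MeasurableSet[m₁] A → MeasurableSet[m₂] B →
    μ[A.indicator (fun _ => 1) * B.indicator (fun _ => 1) | m'] =ᵐ[μ] (μ⟦A | m'⟧) * (μ⟦B | m'⟧)

variable {Ω : Type*} {m m₁ m₂ : MeasurableSpace Ω} [mΩ : MeasurableSpace Ω] {μ : Measure Ω}

theorem CondIndepIndicator.comap_congr {β : Type*} [mβ : MeasurableSpace β] {f g : Ω → β}
    (hf : CondIndepIndicator m₁ (mβ.comap f) m₂ μ) (hfg : f =ᵐ[μ] g) :
    CondIndepIndicator m₁ (mβ.comap g) m₂ μ := by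
  rintro _ B ⟨S, hS, rfl⟩ hB
  have hfgS : (f ⁻¹' S).indicator (fun _ => (1 : ℝ)) =ᵐ[μ] (g ⁻¹' S).indicator (fun _ => 1) :=
    indicator_ae_eq_of_ae_eq_set (hfg.preimage S)
  exact (condExp_congr_ae (hfgS.symm.mul .rfl)).trans
    ((hf _ B ⟨S, hS, rfl⟩ hB).trans ((condExp_congr_ae hfgS).mul .rfl))

theorem isClosed_setOf_setIntegral_eq_setIntegral_condExp {E : Type*} [NormedAddCommGroup E]
    [NormedSpace ℝ E] [CompleteSpace E] (hm₁ : m₁ ≤ mΩ) [SigmaFinite (μ.trim hm₁)] (B : Set Ω) :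
    IsClosed {f : Lp E 1 μ | ∫ ω in B, f ω ∂μ = ∫ ω in B, μ[f | m₁] ω ∂μ} := by
  have h_condExp : (fun f : Lp E 1 μ => ∫ ω in B, μ[f | m₁] ω ∂μ)
      = fun f => ∫ ω in B, condExpL1CLM E hm₁ μ f ω ∂μ := by
    funext f
    have h := condExp_ae_eq_condExpL1CLM hm₁ (L1.integrable_coeFn f)
    rw [Integrable.toL1_coeFn] at h
    exact integral_congr_ae (ae_restrict_of_ae h)
  refine isClosed_eq (continuous_setIntegral B) ?_
  rw [h_condExp]
  exact (continuous_setIntegral B).comp (condExpL1CLM E hm₁ μ).continuous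

variable [IsFiniteMeasure μ]

theorem integral_mul_condExp_indicator (hm₁ : m₁ ≤ mΩ) {g : Ω → ℝ}
    (hg : StronglyMeasurable[m₁] g) (hgi : Integrable g μ) {B : Set Ω} (hB : MeasurableSet B) :
    ∫ ω, g ω * (μ⟦B | m₁⟧) ω ∂μ = ∫ ω in B, g ω ∂μ := by
  have hgB : g * B.indicator (fun _ => 1) = B.indicator g := by
    ext ω; by_cases hω : ω ∈ B <;> simp [hω]
  calc ∫ ω, g ω * (μ⟦B | m₁⟧) ω ∂μ = ∫ ω, μ[g * B.indicator (fun _ => 1) | m₁] ω ∂μ :=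
        integral_congr_ae (condExp_mul_of_stronglyMeasurable_left hg
          (hgB ▸ hgi.indicator hB) ((integrable_const 1).indicator hB)).symm
    _ = ∫ ω in B, g ω ∂μ := by rw [integral_condExp hm₁, hgB, integral_indicator hB]

theorem setIntegral_indicator_eq_setIntegral_condExp (hm₁ : m₁ ≤ mΩ) {A B : Set Ω}
    (hB : MeasurableSet B)
    (hAB : μ[A.indicator (fun _ => 1) * B.indicator (fun _ => 1) | m₁] =ᵐ[μ]
      (μ⟦A | m₁⟧) * (μ⟦B | m₁⟧)) :
    ∫ ω in B, A.indicator (fun _ => (1 : ℝ)) ω ∂μ = ∫ ω in B, (μ⟦A | m₁⟧) ω ∂μ := by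
  calc ∫ ω in B, A.indicator (fun _ => (1 : ℝ)) ω ∂μ
      = ∫ ω, A.indicator (fun _ => (1 : ℝ)) ω * B.indicator (fun _ => 1) ω ∂μ := by
        rw [← integral_indicator hB]
        congr 1; ext ω; by_cases hω : ω ∈ B <;> simp [hω]
    _ = ∫ ω, ((μ⟦A | m₁⟧) * (μ⟦B | m₁⟧)) ω ∂μ := by
        rw [← integral_condExp hm₁]; exact integral_congr_ae hAB
    _ = ∫ ω in B, (μ⟦A | m₁⟧) ω ∂μ :=
        integral_mul_condExp_indicator hm₁ stronglyMeasurable_condExp integrable_condExp hB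

theorem setIntegral_eq_setIntegral_condExp_of_condIndep (hm : m ≤ mΩ) (hm₁ : m₁ ≤ mΩ)
    {f : Ω → ℝ} (hfi : Integrable f μ) (hf : AEStronglyMeasurable[m] f μ)
    {B : Set Ω} (hB : MeasurableSet B)
    (hCI : ∀ A, MeasurableSet[m] A →
      μ[A.indicator (fun _ => 1) * B.indicator (fun _ => 1) | m₁] =ᵐ[μ]
        (μ⟦A | m₁⟧) * (μ⟦B | m₁⟧)) :
    ∫ ω in B, f ω ∂μ = ∫ ω in B, μ[f | m₁] ω ∂μ := by
  refine MemLp.induction_stronglyMeasurable hm ENNReal.one_ne_top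
    (fun g => ∫ ω in B, g ω ∂μ = ∫ ω in B, μ[g | m₁] ω ∂μ) ?_ ?_ ?_ ?_
    (memLp_one_iff_integrable.2 hfi) hf
  · intro c A hA _
    have hc : A.indicator (fun _ => c) = c • A.indicator (fun _ => (1 : ℝ)) := by
      ext ω; by_cases hω : ω ∈ A <;> simp [hω]
    rw [hc, integral_congr_ae (ae_restrict_of_ae (condExp_smul c _ m₁))]
    simp only [Pi.smul_apply, integral_smul]
    rw [setIntegral_indicator_eq_setIntegral_condExp hm₁ hB (hCI A hA)]
  · intro g h _ hg hh _ _ hgB hhB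
    rw [memLp_one_iff_integrable] at hg hh
    rw [integral_congr_ae (ae_restrict_of_ae (condExp_add hg hh m₁)), Pi.add_def,
      integral_add hg.integrableOn hh.integrableOn, hgB, hhB]
    exact (integral_add integrable_condExp.integrableOn integrable_condExp.integrableOn).symm
  · exact (isClosed_setOf_setIntegral_eq_setIntegral_condExp hm₁ B).preimage
      continuous_subtype_val
  · intro g h hgh _ hg
    rw [← integral_congr_ae (ae_restrict_of_ae hgh), hg]
    exact integral_congr_ae (ae_restrict_of_ae (condExp_congr_ae hgh))

theorem condExp_ae_eq_condExp_of_condIndep (hm : m ≤ mΩ) (hm₁₂ : m₁ ≤ m₂) (hm₂ : m₂ ≤ mΩ)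
    {f : Ω → ℝ} (hfi : Integrable f μ) (hf : AEStronglyMeasurable[m] f μ)
    (hCI : CondIndepIndicator m₁ m m₂ μ) :
    μ[f | m₂] =ᵐ[μ] μ[f | m₁] :=
  (ae_eq_condExp_of_forall_setIntegral_eq hm₂ hfi (fun _ _ _ => integrable_condExp.integrableOn)
    (fun B hB _ => (setIntegral_eq_setIntegral_condExp_of_condIndep hm (hm₁₂.trans hm₂) hfi hf
      (hm₂ B hB) fun A hA => hCI A B hA hB).symm)
    (stronglyMeasurable_condExp.mono hm₁₂).aestronglyMeasurable).symm

end MeasureTheory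

theorem mse_eq_of_condIndep_general {Ω : Type*} [F : MeasurableSpace Ω] (μ : Measure Ω)
    [IsProbabilityMeasure μ] (m₁ m₂ : MeasurableSpace Ω)
    (hm₁₂ : m₁ ≤ m₂) (hm₂ : m₂ ≤ F)
    (Y : Ω → ℝ)
    (hCI : ∀ A B : Set Ω,
      MeasurableSet[MeasurableSpace.comap Y (inferInstance : MeasurableSpace ℝ)] A →
      MeasurableSet[m₂] B →
      (μ[fun ω => A.indicator (fun _ => (1 : ℝ)) ω * B.indicator (fun _ => (1 : ℝ)) ω | m₁])
        =ᵐ[μ] fun ω =>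
          (μ[A.indicator (fun _ => (1 : ℝ)) | m₁]) ω * (μ[B.indicator (fun _ => (1 : ℝ)) | m₁]) ω) :
    (∫ ω, (Y ω - (μ[Y|m₂]) ω) ^ 2 ∂μ) = ∫ ω, (Y ω - (μ[Y|m₁]) ω) ^ 2 ∂μ := by
  suffices hY : μ[Y | m₂] =ᵐ[μ] μ[Y | m₁] by
    refine integral_congr_ae (hY.mono fun ω h => ?_)
    simp only [h]
  by_cases hYi : Integrable Y μ
  swap; · simp only [condExp_of_not_integrable hYi]; exact .rfl
  -- `σ(Y)` need not lie inside `F`, so we work with `σ(Y')` for a measurable version `Y'`.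
  obtain ⟨Y', hY', hYY'⟩ := hYi.aestronglyMeasurable
  exact condExp_ae_eq_condExp_of_condIndep (mΩ := F) hY'.measurable.comap_le hm₁₂ hm₂ hYi
    ⟨Y', (comap_measurable Y').stronglyMeasurable, hYY'⟩
    (CondIndepIndicator.comap_congr (mΩ := F) hCI hYY')

/-- If `m₁ ⊆ m₂` and `σ(Y)` and `m₂` are conditionally independent given `m₁`, then
regressing on `m₂` achieves the same mean squared prediction error as regressing on `m₁`:
`E[(Y − E[Y|m₂])²] = E[(Y − E[Y|m₁])²]`. -/
theorem mse_eq_of_condIndep {Ω : Type*} [F : MeasurableSpace Ω] (μ : Measure Ω)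
    [IsProbabilityMeasure μ] (m₁ m₂ : MeasurableSpace Ω)
    (hm₁₂ : m₁ ≤ m₂) (hm₂ : m₂ ≤ F)
    (Y : Ω → ℝ) (hY : MemLp Y 2 μ)
    (hCI : ∀ A B : Set Ω,
      MeasurableSet[MeasurableSpace.comap Y (inferInstance : MeasurableSpace ℝ)] A →
      MeasurableSet[m₂] B →
      (μ[fun ω => A.indicator (fun _ => (1 : ℝ)) ω * B.indicator (fun _ => (1 : ℝ)) ω | m₁])
        =ᵐ[μ] fun ω =>
          (μ[A.indicator (fun _ => (1 : ℝ)) | m₁]) ω * (μ[B.indicator (fun _ => (1 : ℝ)) | m₁]) ω) :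
    (∫ ω, (Y ω - (μ[Y|m₂]) ω) ^ 2 ∂μ) = ∫ ω, (Y ω - (μ[Y|m₁]) ω) ^ 2 ∂μ :=
  mse_eq_of_condIndep_general (F := F) μ m₁ m₂ hm₁₂ hm₂ Y hCI
end
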